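/- arXiv:1701.00753 — 5 statements merged into one kernel-verified Lean document; each statement's English description precedes it below -/
import Mathlib

section
/- Let J ∈ ℝ^{n×n} be invertible, Y ∈ ℝ^{n×s}, Z ∈ ℝ^{s×n}, L ∈ ℝ^{s×s} strictly lower triangular, and Σ a diagonal sign matrix. Then det(J + YΣ(I - LΣ)^{-1}Z) = det(J)·det(I - SΣ), where S = L - ZJ^{-1}Y is the Schur complement. -/
/-!
Since `LΣ` is strictly lower triangular, `N := I - LΣ` is unitriangular, so `det N = 1`.
The generalized matrix determinant lemma (Sylvester's identity) gives
`det(J + (YΣ) N⁻¹ Z) · det N = det J · det(N + Z J⁻¹ YΣ)`, and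
`N + Z J⁻¹ YΣ = I - (L - Z J⁻¹ Y)Σ`.
-/

namespace Matrix

variable {ι m n R : Type*} [Fintype m] [Fintype n] [DecidableEq m] [DecidableEq n] [CommRing R]

theorem det_one_sub_of_strictly_lower [Fintype ι] [DecidableEq ι] [LinearOrder ι]
    {M : Matrix ι ι R} (hM : ∀ i j, i ≤ j → M i j = 0) : (1 - M).det = 1 := by
  have hlower : (1 - M).IsLowerTriangular := fun i j (hij : i < j) => by
    simp [one_apply_ne hij.ne, hM i j hij.le]
  rw [det_of_isLowerTriangular _ hlower]
  exact Finset.prod_eq_one fun i _ => by simp [hM i i le_rfl]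

theorem det_add_mul_nonsing_inv_mul {A : Matrix m m R} {N : Matrix n n R} (hA : IsUnit A.det)
    (hN : IsUnit N.det) (U : Matrix m n R) (V : Matrix n m R) :
    (A + U * N⁻¹ * V).det * N.det = A.det * (N + V * A⁻¹ * U).det := by
  have hfactor : 1 + V * A⁻¹ * (U * N⁻¹) = (N + V * A⁻¹ * U) * N⁻¹ := by
    rw [add_mul, mul_nonsing_inv N hN]
    simp only [Matrix.mul_assoc]
  rw [det_add_mul _ _ hA, hfactor, det_mul, mul_assoc, mul_assoc, ← det_mul,
    nonsing_inv_mul N hN, det_one, mul_one]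

end Matrix

theorem det_absnormal_jacobian_eq_det_mul_det_schur_general
    (n s : ℕ) (J : Matrix (Fin n) (Fin n) ℝ) (Y : Matrix (Fin n) (Fin s) ℝ)
    (Z : Matrix (Fin s) (Fin n) ℝ) (L : Matrix (Fin s) (Fin s) ℝ)
    (hJ : IsUnit J)
    (hL : ∀ i j : Fin s, i ≤ j → L i j = 0)
    (σ : Fin s → ℝ) :
    (J + Y * Matrix.diagonal σ * (1 - L * Matrix.diagonal σ)⁻¹ * Z).det =
      J.det * (1 - (L - Z * J⁻¹ * Y) * Matrix.diagonal σ).det := by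
  set N := 1 - L * Matrix.diagonal σ
  have hN : N.det = 1 :=
    Matrix.det_one_sub_of_strictly_lower fun i j hij => by simp [Matrix.mul_diagonal, hL i j hij]
  have hschur :
      1 - (L - Z * J⁻¹ * Y) * Matrix.diagonal σ = N + Z * J⁻¹ * (Y * Matrix.diagonal σ) := by
    simp only [N, sub_mul, Matrix.mul_assoc]
    abel
  have hJdet : IsUnit J.det := (Matrix.isUnit_iff_isUnit_det J).mp hJ
  have hdet :=
    Matrix.det_add_mul_nonsing_inv_mul hJdet (hN ▸ isUnit_one) (Y * Matrix.diagonal σ) Z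
  rwa [hN, mul_one, ← hschur] at hdet

/-- Determinant formula `det(J + YΣ(I-LΣ)⁻¹Z) = det(J) · det(I - SΣ)` with the
Schur complement `S = L - Z J⁻¹ Y`. -/
theorem det_absnormal_jacobian_eq_det_mul_det_schur
    (n s : ℕ) (J : Matrix (Fin n) (Fin n) ℝ) (Y : Matrix (Fin n) (Fin s) ℝ)
    (Z : Matrix (Fin s) (Fin n) ℝ) (L : Matrix (Fin s) (Fin s) ℝ)
    (hJ : IsUnit J)
    (hL : ∀ i j : Fin s, i ≤ j → L i j = 0)
    (σ : Fin s → ℝ) (hσ : ∀ i, σ i = 1 ∨ σ i = -1 ∨ σ i = 0) :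
    (J + Y * Matrix.diagonal σ * (1 - L * Matrix.diagonal σ)⁻¹ * Z).det =
      J.det * (1 - (L - Z * J⁻¹ * Y) * Matrix.diagonal σ).det :=
  det_absnormal_jacobian_eq_det_mul_det_schur_general n s J Y Z L hJ hL σ
end

section
/- Let J_σ = J + YΣ(I - LΣ)^{-1}Z with J invertible, and set ρ̂ = ‖J^{-1}Y‖_p ‖Z‖_p. If ρ̂ < 1 - ‖L‖_p, then for every diagonal sign matrix Σ the matrix J_σ is invertible and ‖J_σ^{-1} J‖_p ≤ (1 - ‖L‖_p)/(1 - ρ̂ - ‖L‖_p). -/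
/-- An operator norm family induced by an absolute (monotone) vector norm,
abstracting the induced matrix p-norms. -/
structure PNormFamily where
  /-- the vector norm -/
  vnorm : ∀ {k : ℕ}, (Fin k → ℝ) → ℝ
  /-- the induced matrix norm -/
  mnorm : ∀ {m k : ℕ}, Matrix (Fin m) (Fin k) ℝ → ℝ
  vnorm_nonneg : ∀ {k : ℕ} (x : Fin k → ℝ), 0 ≤ vnorm x
  vnorm_eq_zero_iff : ∀ {k : ℕ} (x : Fin k → ℝ), vnorm x = 0 ↔ x = 0
  vnorm_add_le : ∀ {k : ℕ} (x y : Fin k → ℝ), vnorm (x + y) ≤ vnorm x + vnorm y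
  vnorm_smul : ∀ {k : ℕ} (c : ℝ) (x : Fin k → ℝ), vnorm (c • x) = |c| * vnorm x
  vnorm_mono : ∀ {k : ℕ} (x y : Fin k → ℝ), (∀ i, |x i| ≤ |y i|) → vnorm x ≤ vnorm y
  mnorm_spec : ∀ {m k : ℕ} (A : Matrix (Fin m) (Fin k) ℝ) (x : Fin k → ℝ),
    vnorm (A.mulVec x) ≤ mnorm A * vnorm x
  mnorm_le : ∀ {m k : ℕ} (A : Matrix (Fin m) (Fin k) ℝ) (c : ℝ), 0 ≤ c →
    (∀ x : Fin k → ℝ, vnorm (A.mulVec x) ≤ c * vnorm x) → mnorm A ≤ c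


namespace PNormFamily

lemma vnorm_zero (P : PNormFamily) {k : ℕ} : P.vnorm (0 : Fin k → ℝ) = 0 :=
  (P.vnorm_eq_zero_iff 0).mpr rfl

lemma vnorm_neg (P : PNormFamily) {k : ℕ} (x : Fin k → ℝ) :
    P.vnorm (-x) = P.vnorm x := by
  have := P.vnorm_smul (-1) x
  simpa using this

lemma mnorm_nonpos_left (P : PNormFamily) {k : ℕ} (A : Matrix (Fin 0) (Fin k) ℝ) :
    P.mnorm A ≤ 0 := by
  refine P.mnorm_le A 0 le_rfl fun x => ?_
  have h : A.mulVec x = 0 := Subsingleton.elim _ _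
  rw [h, P.vnorm_zero, zero_mul]

lemma mnorm_nonpos_right (P : PNormFamily) {m : ℕ} (A : Matrix (Fin m) (Fin 0) ℝ) :
    P.mnorm A ≤ 0 := by
  refine P.mnorm_le A 0 le_rfl fun x => ?_
  have hx : x = 0 := Subsingleton.elim _ _
  rw [hx, Matrix.mulVec_zero, P.vnorm_zero, zero_mul]

lemma mnorm_nonneg (P : PNormFamily) {m k : ℕ} (hk : 0 < k)
    (A : Matrix (Fin m) (Fin k) ℝ) : 0 ≤ P.mnorm A := by
  set x : Fin k → ℝ := fun _ => 1 with hxdef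
  have hx : x ≠ 0 := by
    intro h
    have := congrFun h ⟨0, hk⟩
    simp [hxdef] at this
  have hxpos : 0 < P.vnorm x :=
    lt_of_le_of_ne (P.vnorm_nonneg x)
      (fun h => hx ((P.vnorm_eq_zero_iff x).mp h.symm))
  have h1 := P.mnorm_spec A x
  nlinarith [P.vnorm_nonneg (A.mulVec x)]

lemma mnorm_one_le (P : PNormFamily) {m : ℕ} :
    P.mnorm (1 : Matrix (Fin m) (Fin m) ℝ) ≤ 1 := by
  refine P.mnorm_le 1 1 zero_le_one fun x => ?_
  rw [Matrix.one_mulVec, one_mul]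

end PNormFamily

/-- Banach-perturbation bound: if `rhoHat = ‖J⁻¹Y‖‖Z‖ < 1 - ‖L‖`, then every
limiting Jacobian `J_σ = J + YΣ(I-LΣ)⁻¹Z` is invertible with
`‖J_σ⁻¹ J‖ ≤ (1-‖L‖)/(1-rhoHat-‖L‖)`. -/
theorem jacobian_inverse_norm_bound
    (n s : ℕ) (P : PNormFamily)
    (J : Matrix (Fin n) (Fin n) ℝ) (Y : Matrix (Fin n) (Fin s) ℝ)
    (Z : Matrix (Fin s) (Fin n) ℝ) (L : Matrix (Fin s) (Fin s) ℝ)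
    (hJ : IsUnit J)
    (hL : ∀ i j : Fin s, i ≤ j → L i j = 0)
    (rhoHat : ℝ) (hρ : rhoHat = P.mnorm (J⁻¹ * Y) * P.mnorm Z)
    (hsmall : rhoHat < 1 - P.mnorm L)
    (σ : Fin s → ℝ) (hσ : ∀ i, σ i = 1 ∨ σ i = -1 ∨ σ i = 0) :
    IsUnit (J + Y * Matrix.diagonal σ * (1 - L * Matrix.diagonal σ)⁻¹ * Z) ∧
      P.mnorm ((J + Y * Matrix.diagonal σ * (1 - L * Matrix.diagonal σ)⁻¹ * Z)⁻¹ * J)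
        ≤ (1 - P.mnorm L) / (1 - rhoHat - P.mnorm L) := by
  -- rhoHat is nonnegative in all cases
  have hρ0 : 0 ≤ rhoHat := by
    rcases Nat.eq_zero_or_pos s with hs | hs
    · subst hs
      rw [hρ]
      nlinarith [P.mnorm_nonpos_right (J⁻¹ * Y), P.mnorm_nonpos_left Z]
    · rcases Nat.eq_zero_or_pos n with hn | hn
      · subst hn
        rw [hρ]
        nlinarith [P.mnorm_nonpos_left (J⁻¹ * Y), P.mnorm_nonpos_right Z]
      · rw [hρ]
        exact mul_nonneg (P.mnorm_nonneg hs _) (P.mnorm_nonneg hn _)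
  have hL1 : P.mnorm L < 1 := by linarith
  have h1L : (0:ℝ) < 1 - P.mnorm L := by linarith
  have hden : (0:ℝ) < 1 - rhoHat - P.mnorm L := by linarith
  have hRHS1 : 1 ≤ (1 - P.mnorm L) / (1 - rhoHat - P.mnorm L) := by
    rw [le_div_iff₀ hden]; linarith
  have hRHSpos : (0:ℝ) < (1 - P.mnorm L) / (1 - rhoHat - P.mnorm L) :=
    lt_of_lt_of_le zero_lt_one hRHS1
  have hJdet : IsUnit J.det := (Matrix.isUnit_iff_isUnit_det J).mp hJ
  have hJJ : J * J⁻¹ = 1 := Matrix.mul_nonsing_inv J hJdet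
  have hJJ' : J⁻¹ * J = 1 := Matrix.nonsing_inv_mul J hJdet
  rcases Nat.eq_zero_or_pos n with hn | hn
  · subst hn
    refine ⟨isUnit_of_subsingleton _, ?_⟩
    exact le_trans (P.mnorm_nonpos_left _) (le_of_lt hRHSpos)
  rcases Nat.eq_zero_or_pos s with hs | hs
  · subst hs
    have hzero : Y * Matrix.diagonal σ * (1 - L * Matrix.diagonal σ)⁻¹ * Z = 0 := by
      ext i j
      simp [Matrix.mul_apply]
    rw [hzero, add_zero]
    exact ⟨hJ, by rw [hJJ']; exact le_trans P.mnorm_one_le hRHS1⟩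
  -- main case : 0 < n, 0 < s
  set D := Matrix.diagonal σ with hD
  set K := (1 : Matrix (Fin s) (Fin s) ℝ) - L * D with hK
  have hLnn : 0 ≤ P.mnorm L := P.mnorm_nonneg hs L
  -- K is lower triangular with unit diagonal
  have hKtri : K.BlockTriangular OrderDual.toDual := by
    intro i j hij
    have hij' : i < j := hij
    have hLij : L i j = 0 := hL i j (le_of_lt hij')
    simp [hK, hD, Matrix.sub_apply, Matrix.one_apply_ne (ne_of_lt hij'), Matrix.mul_diagonal, hLij]
  have hKdet : K.det = 1 := by
    rw [Matrix.det_of_lowerTriangular K hKtri]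
    have : ∀ i, K i i = 1 := by
      intro i
      simp [hK, hD, Matrix.sub_apply, Matrix.one_apply_eq, Matrix.mul_diagonal, hL i i le_rfl]
    simp [this]
  have hKunit : IsUnit K.det := by rw [hKdet]; exact isUnit_one
  set M := K⁻¹ with hM
  have hKM : K * M = 1 := Matrix.mul_nonsing_inv K hKunit
  -- contraction property of D
  have hDc : ∀ w : Fin s → ℝ, P.vnorm (D.mulVec w) ≤ P.vnorm w := by
    intro w
    refine P.vnorm_mono _ w fun i => ?_
    rw [hD, Matrix.mulVec_diagonal, abs_mul]
    have hσi : |σ i| ≤ 1 := by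
      rcases hσ i with h | h | h <;> simp [h]
    exact mul_le_of_le_one_left (abs_nonneg (w i)) hσi
  -- bound on M = K⁻¹
  have hMb : ∀ u : Fin s → ℝ, P.vnorm (M.mulVec u) ≤ (1 - P.mnorm L)⁻¹ * P.vnorm u := by
    intro u
    set y := M.mulVec u with hy
    have hKy : K.mulVec y = u := by
      rw [hy, Matrix.mulVec_mulVec, hKM, Matrix.one_mulVec]
    have hyu : y = u + (L * D).mulVec y := by
      have : u = y - (L * D).mulVec y := by
        rw [← hKy, hK, Matrix.sub_mulVec, Matrix.one_mulVec]
      rw [this]; abel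
    have h1 : P.vnorm y ≤ P.vnorm u + P.vnorm ((L * D).mulVec y) := by
      conv_lhs => rw [hyu]
      exact P.vnorm_add_le u _
    have h2 : P.vnorm ((L * D).mulVec y) ≤ P.mnorm L * P.vnorm y := by
      rw [← Matrix.mulVec_mulVec]
      calc P.vnorm (L.mulVec (D.mulVec y)) ≤ P.mnorm L * P.vnorm (D.mulVec y) :=
            P.mnorm_spec L _
        _ ≤ P.mnorm L * P.vnorm y := mul_le_mul_of_nonneg_left (hDc y) hLnn
    rw [inv_mul_eq_div, le_div_iff₀ h1L]
    nlinarith [P.vnorm_nonneg y]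
  set B := J⁻¹ * Y * Matrix.diagonal σ * (1 - L * Matrix.diagonal σ)⁻¹ * Z with hB
  have hYn : 0 ≤ P.mnorm (J⁻¹ * Y) := P.mnorm_nonneg hs _
  have hZn : 0 ≤ P.mnorm Z := P.mnorm_nonneg hn _
  set β := rhoHat / (1 - P.mnorm L) with hβdef
  have hβ0 : 0 ≤ β := div_nonneg hρ0 (le_of_lt h1L)
  have hβ1 : β < 1 := (div_lt_one h1L).mpr (by linarith)
  -- vector bound for B
  have hBb : ∀ x : Fin n → ℝ, P.vnorm (B.mulVec x) ≤ β * P.vnorm x := by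
    intro x
    have e1 : B.mulVec x = (J⁻¹ * Y).mulVec (D.mulVec (M.mulVec (Z.mulVec x))) := by
      rw [hB]
      simp only [← hD, ← hK, ← hM, ← Matrix.mulVec_mulVec]
    rw [e1]
    calc P.vnorm ((J⁻¹ * Y).mulVec (D.mulVec (M.mulVec (Z.mulVec x))))
        ≤ P.mnorm (J⁻¹ * Y) * P.vnorm (D.mulVec (M.mulVec (Z.mulVec x))) :=
          P.mnorm_spec _ _
      _ ≤ P.mnorm (J⁻¹ * Y) * P.vnorm (M.mulVec (Z.mulVec x)) :=
          mul_le_mul_of_nonneg_left (hDc _) hYn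
      _ ≤ P.mnorm (J⁻¹ * Y) * ((1 - P.mnorm L)⁻¹ * P.vnorm (Z.mulVec x)) :=
          mul_le_mul_of_nonneg_left (hMb _) hYn
      _ ≤ P.mnorm (J⁻¹ * Y) * ((1 - P.mnorm L)⁻¹ * (P.mnorm Z * P.vnorm x)) := by
          refine mul_le_mul_of_nonneg_left ?_ hYn
          exact mul_le_mul_of_nonneg_left (P.mnorm_spec _ _) (inv_nonneg.mpr (le_of_lt h1L))
      _ = β * P.vnorm x := by
          rw [hβdef, hρ]; field_simp
  -- 1 + B is invertible
  have hker : ∀ v : Fin n → ℝ, (1 + B).mulVec v = 0 → v = 0 := by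
    intro v hv
    have h1 : v + B.mulVec v = 0 := by
      rw [Matrix.add_mulVec, Matrix.one_mulVec] at hv
      exact hv
    have h2 : v = -(B.mulVec v) := eq_neg_of_add_eq_zero_left h1
    have h3 : P.vnorm v ≤ β * P.vnorm v := by
      calc P.vnorm v = P.vnorm (-(B.mulVec v)) := by rw [← h2]
        _ = P.vnorm (B.mulVec v) := P.vnorm_neg _
        _ ≤ β * P.vnorm v := hBb v
    have h4 : P.vnorm v = 0 := by nlinarith [P.vnorm_nonneg v]
    exact (P.vnorm_eq_zero_iff v).mp h4
  have hinj : Function.Injective (1 + B).mulVec := by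
    intro x y hxy
    have : (1 + B).mulVec (x - y) = 0 := by
      rw [Matrix.mulVec_sub, hxy, sub_self]
    have := hker _ this
    exact sub_eq_zero.mp this
  have hU1B : IsUnit (1 + B) := Matrix.mulVec_injective_iff_isUnit.mp hinj
  have hU1Bdet : IsUnit (1 + B).det := (Matrix.isUnit_iff_isUnit_det _).mp hU1B
  -- factorization
  have hfact : J + Y * Matrix.diagonal σ * (1 - L * Matrix.diagonal σ)⁻¹ * Z = J * (1 + B) := by
    rw [mul_add, mul_one, hB]
    congr 1
    symm
    calc J * (J⁻¹ * Y * Matrix.diagonal σ * (1 - L * Matrix.diagonal σ)⁻¹ * Z)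
        = J * J⁻¹ * Y * Matrix.diagonal σ * (1 - L * Matrix.diagonal σ)⁻¹ * Z := by
          simp only [Matrix.mul_assoc]
      _ = Y * Matrix.diagonal σ * (1 - L * Matrix.diagonal σ)⁻¹ * Z := by
          rw [hJJ, Matrix.one_mul]
  constructor
  · rw [hfact]; exact hJ.mul hU1B
  · have hinvrw : (J + Y * Matrix.diagonal σ * (1 - L * Matrix.diagonal σ)⁻¹ * Z)⁻¹ * J
        = (1 + B)⁻¹ := by
      rw [hfact, Matrix.mul_inv_rev, Matrix.mul_assoc, hJJ', Matrix.mul_one]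
    rw [hinvrw]
    have hinv2 : (1 + B) * (1 + B)⁻¹ = 1 := Matrix.mul_nonsing_inv _ hU1Bdet
    refine P.mnorm_le _ _ (le_of_lt hRHSpos) fun x => ?_
    set y := (1 + B)⁻¹.mulVec x with hy
    have hxy : x = y + B.mulVec y := by
      have h1 : (1 + B).mulVec y = x := by
        rw [hy, Matrix.mulVec_mulVec, hinv2, Matrix.one_mulVec]
      rw [← h1, Matrix.add_mulVec, Matrix.one_mulVec]
    have h1 : P.vnorm y ≤ P.vnorm x + β * P.vnorm y := by
      have h2 : y = x + (-(B.mulVec y)) := by rw [hxy]; abel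
      calc P.vnorm y ≤ P.vnorm x + P.vnorm (-(B.mulVec y)) := by
            conv_lhs => rw [h2]
            exact P.vnorm_add_le _ _
        _ = P.vnorm x + P.vnorm (B.mulVec y) := by rw [P.vnorm_neg]
        _ ≤ P.vnorm x + β * P.vnorm y := by linarith [hBb y]
    have hRHSeq : (1 - P.mnorm L) / (1 - rhoHat - P.mnorm L) = (1 - β)⁻¹ := by
      have hne : (1 - P.mnorm L) ≠ 0 := ne_of_gt h1L
      rw [hβdef]
      have heq : 1 - rhoHat / (1 - P.mnorm L) = (1 - rhoHat - P.mnorm L) / (1 - P.mnorm L) := by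
        field_simp
        ring
      rw [heq, inv_div]
    rw [hRHSeq, inv_mul_eq_div, le_div_iff₀ (by linarith : (0:ℝ) < 1 - β)]
    nlinarith [P.vnorm_nonneg y, P.vnorm_nonneg x]
end

section
/- If S ∈ ℝ^{s×s} satisfies ‖S‖_∞ < 1/2, then for every diagonal sign matrix Σ with entries in {-1,1}, the matrix (I - SΣ)^{-1} is strictly diagonally dominant with positive diagonal entries. -/
/-!
With `T = SΣ`, the sign matrix does not change absolute row sums, so `‖T‖_∞ ≤ ‖S‖_∞ = t < 1/2`.
The Neumann series makes `1 - T` invertible, and `B = (1 - T)⁻¹` satisfies `B - 1 = T + (B - 1)T`,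
whence `‖B - 1‖_∞ ≤ t / (1 - t) < 1`. A matrix within `∞`-distance `1` of the identity has
positive diagonal and is strictly diagonally dominant, row by row.
-/

/-- The induced `∞`-norm (maximal absolute row sum) of a real matrix. -/
noncomputable def linfNorm {m n : ℕ} (A : Matrix (Fin m) (Fin n) ℝ) : ℝ :=
  ⨆ i : Fin m, ∑ j : Fin n, |A i j|

theorem norm_sub_one_le_of_mul_one_sub_eq_one {R : Type*} [SeminormedRing R] {b t : R}
    (hb : b * (1 - t) = 1) (ht : ‖t‖ < 1) : ‖b - 1‖ ≤ ‖t‖ / (1 - ‖t‖) := by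
  have hbt : b - 1 = t + (b - 1) * t := by
    calc b - 1 = b - b * (1 - t) := by rw [hb]
      _ = t + (b - 1) * t := by noncomm_ring
  have : ‖b - 1‖ ≤ ‖t‖ + ‖b - 1‖ * ‖t‖ := by
    conv_lhs => rw [hbt]
    exact norm_add_le_of_le le_rfl (norm_mul_le _ _)
  rw [le_div_iff₀ (sub_pos.2 ht)]
  linarith

theorem sum_abs_le_linfNorm {m n : ℕ} (A : Matrix (Fin m) (Fin n) ℝ) (i : Fin m) :
    ∑ j, |A i j| ≤ linfNorm A :=
  le_ciSup (f := fun i => ∑ j, |A i j|) (Set.finite_range _).bddAbove i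

section LinftyOpNorm

attribute [local instance] Matrix.linftyOpNormedRing

theorem linfNorm_eq_linfty_opNorm {n : ℕ} (A : Matrix (Fin n) (Fin n) ℝ) : linfNorm A = ‖A‖ := by
  rw [Matrix.linfty_opNorm_def, linfNorm, Finset.sup_univ_eq_ciSup, NNReal.coe_iSup]
  simp [Real.norm_eq_abs]

theorem linfNorm_mul_diagonal_le {n : ℕ} (S : Matrix (Fin n) (Fin n) ℝ) {σ : Fin n → ℝ}
    (hσ : ∀ i, |σ i| ≤ 1) : linfNorm (S * Matrix.diagonal σ) ≤ linfNorm S := by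
  simp only [linfNorm_eq_linfty_opNorm]
  calc ‖S * Matrix.diagonal σ‖ ≤ ‖S‖ * ‖Matrix.diagonal σ‖ := Matrix.linfty_opNorm_mul _ _
    _ ≤ ‖S‖ * 1 := by
      rw [Matrix.linfty_opNorm_diagonal]
      exact mul_le_mul_of_nonneg_left (pi_norm_le_iff_of_nonneg zero_le_one |>.2 hσ) (norm_nonneg _)
    _ = ‖S‖ := mul_one _

theorem isUnit_one_sub_of_linfNorm_lt_one {n : ℕ} {T : Matrix (Fin n) (Fin n) ℝ}
    (hT : linfNorm T < 1) : IsUnit (1 - T) := by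
  -- the `linfty` norm induces the product uniformity, but instance search cannot see it
  have : @CompleteSpace (Matrix (Fin n) (Fin n) ℝ) PseudoMetricSpace.toUniformSpace :=
    inferInstanceAs (CompleteSpace (Fin n → Fin n → ℝ))
  exact isUnit_one_sub_of_norm_lt_one (linfNorm_eq_linfty_opNorm T ▸ hT)

theorem linfNorm_inv_one_sub_sub_one_le {n : ℕ} {T : Matrix (Fin n) (Fin n) ℝ}
    (hT : linfNorm T < 1) : linfNorm ((1 - T)⁻¹ - 1) ≤ linfNorm T / (1 - linfNorm T) := by
  have hdet : IsUnit (1 - T).det :=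
    (Matrix.isUnit_iff_isUnit_det _).1 (isUnit_one_sub_of_linfNorm_lt_one hT)
  simp only [linfNorm_eq_linfty_opNorm] at hT ⊢
  exact norm_sub_one_le_of_mul_one_sub_eq_one (Matrix.nonsing_inv_mul _ hdet) hT

end LinftyOpNorm

theorem pos_diag_and_sum_abs_offDiag_lt_of_linfNorm_sub_one_lt_one {n : ℕ}
    {B : Matrix (Fin n) (Fin n) ℝ} (hB : linfNorm (B - 1) < 1) (i : Fin n) :
    0 < B i i ∧ ∑ j ∈ Finset.univ.erase i, |B i j| < |B i i| := by
  have hrow := (sum_abs_le_linfNorm (B - 1) i).trans_lt hB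
  have hoff : ∑ j ∈ Finset.univ.erase i, |(B - 1) i j| = ∑ j ∈ Finset.univ.erase i, |B i j| :=
    Finset.sum_congr rfl fun j hj => by
      rw [Matrix.sub_apply, Matrix.one_apply_ne (Finset.ne_of_mem_erase hj).symm, sub_zero]
  rw [← Finset.sum_erase_add _ _ (Finset.mem_univ i), hoff, Matrix.sub_apply,
    Matrix.one_apply_eq] at hrow
  have hoff_nonneg := Finset.sum_nonneg fun j (_ : j ∈ Finset.univ.erase i) => abs_nonneg (B i j)
  have hpos : 0 < B i i := by linarith [neg_abs_le (B i i - 1)]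
  refine ⟨hpos, ?_⟩
  rw [abs_of_pos hpos]
  linarith [neg_abs_le (B i i - 1)]

/-- If `‖S‖_∞ < 1/2` then for every diagonal sign matrix `Σ` with entries in
`{-1,1}` the inverse `(I - SΣ)⁻¹` is strictly diagonally dominant with
positive diagonal entries. -/
theorem inv_one_sub_sign_strictly_diagonally_dominant
    (s : ℕ) (S : Matrix (Fin s) (Fin s) ℝ)
    (hS : linfNorm S < 1 / 2)
    (σ : Fin s → ℝ) (hσ : ∀ i, σ i = 1 ∨ σ i = -1) :
    IsUnit (1 - S * Matrix.diagonal σ) ∧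
      ∀ i : Fin s,
        0 < (1 - S * Matrix.diagonal σ)⁻¹ i i ∧
        ∑ j ∈ Finset.univ.erase i, |(1 - S * Matrix.diagonal σ)⁻¹ i j| <
          |(1 - S * Matrix.diagonal σ)⁻¹ i i| := by
  have hT : linfNorm (S * Matrix.diagonal σ) < 1 / 2 :=
    (linfNorm_mul_diagonal_le S fun i => by rcases hσ i with h | h <;> simp [h]).trans_lt hS
  have hT1 : linfNorm (S * Matrix.diagonal σ) < 1 := hT.trans (by norm_num)
  have hB : linfNorm ((1 - S * Matrix.diagonal σ)⁻¹ - 1) < 1 := by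
    refine (linfNorm_inv_one_sub_sub_one_le hT1).trans_lt ?_
    rw [div_lt_one (by linarith)]
    linarith
  exact ⟨isUnit_one_sub_of_linfNorm_lt_one hT1,
    pos_diag_and_sum_abs_offDiag_lt_of_linfNorm_sub_one_lt_one hB⟩
end

section
/- Let S = (s_ij) ∈ ℝ^{s×s} with ‖S‖_∞ ≤ ρ ≤ 1/2, and fix a sign σ₁ ∈ {-1,1}. Define the reduced (s-1)×(s-1) matrix S̃ by s̃_ij = s_ij + s_{i1}s_{1j}/(σ₁ - s_{11}) for i,j = 2,...,s. Then ‖S̃‖_∞ ≤ ρ. -/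
/-! The pivot row has absolute row sum at most `1`, so its off-pivot part is bounded by
`1 - |s₁₁| ≤ |σ₁ - s₁₁|`. Hence the rank-one correction `s_{i1} s_{1j} / (σ₁ - s₁₁)` of row `i`
has absolute sum at most `|s_{i1}|`, which is exactly the mass of the eliminated entry. -/

open Finset

theorem sum_abs_add_mul_div_le {ι : Type*} [Fintype ι] (r c : ι → ℝ) (b d : ℝ)
    (hc : ∑ j, |c j| ≤ |d|) :
    ∑ j, |r j + b * c j / d| ≤ ∑ j, |r j| + |b| := by
  have hcorr : |b| / |d| * ∑ j, |c j| ≤ |b| := by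
    rw [div_mul_eq_mul_div, mul_div_assoc]
    exact mul_le_of_le_one_right (abs_nonneg b) (div_le_one_of_le₀ hc (abs_nonneg d))
  calc ∑ j, |r j + b * c j / d|
      ≤ ∑ j, (|r j| + |b| / |d| * |c j|) := by
        gcongr with j
        refine (abs_add_le _ _).trans_eq ?_
        rw [abs_div, abs_mul, mul_div_right_comm]
    _ = ∑ j, |r j| + |b| / |d| * ∑ j, |c j| := by rw [sum_add_distrib, mul_sum]
    _ ≤ ∑ j, |r j| + |b| := by linarith

theorem sum_abs_tail_le_abs_sub_head {n : ℕ} (c : Fin (n + 1) → ℝ) {σ : ℝ} (hσ : |σ| = 1)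
    (hc : ∑ j, |c j| ≤ 1) :
    ∑ j : Fin n, |c j.succ| ≤ |σ - c 0| := by
  rw [Fin.sum_univ_succ] at hc
  have := abs_sub_abs_le_abs_sub σ (c 0)
  linarith

/-- One step of signed Gaussian elimination preserves the row-sum bound:
if `‖S‖_∞ ≤ ρ ≤ 1/2` and `σ₁ ∈ {-1,1}`, the reduced matrix
`s̃_ij = s_ij + s_{i1} s_{1j}/(σ₁ - s_{11})` again satisfies `‖S̃‖_∞ ≤ ρ`. -/
theorem signed_gaussian_elimination_step
    (n : ℕ) (S : Matrix (Fin (n + 1)) (Fin (n + 1)) ℝ)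
    (ρ : ℝ) (hρ : ρ ≤ 1 / 2)
    (hS : ∀ i, ∑ j, |S i j| ≤ ρ)
    (σ₁ : ℝ) (hσ : σ₁ = 1 ∨ σ₁ = -1) :
    ∀ i : Fin n, ∑ j : Fin n,
      |S i.succ j.succ + S i.succ 0 * S 0 j.succ / (σ₁ - S 0 0)| ≤ ρ := by
  intro i
  have hσ_abs : |σ₁| = 1 := by rcases hσ with rfl | rfl <;> simp
  have hpivot : ∑ j : Fin n, |S 0 j.succ| ≤ |σ₁ - S 0 0| :=
    sum_abs_tail_le_abs_sub_head (S 0) hσ_abs (by linarith [hS 0])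
  calc ∑ j : Fin n, |S i.succ j.succ + S i.succ 0 * S 0 j.succ / (σ₁ - S 0 0)|
      ≤ ∑ j : Fin n, |S i.succ j.succ| + |S i.succ 0| :=
        sum_abs_add_mul_div_le _ _ _ _ hpivot
    _ = ∑ j, |S i.succ j| := by rw [Fin.sum_univ_succ, add_comm]
    _ ≤ ρ := hS i.succ
end

section
/- Let S ∈ ℝ^{s×s} be the cyclic Toeplitz matrix with entries a in positions (1,s) and (i+1,i) for i = 1,...,s-1, and zero elsewhere, where s > 2 and 1/2 + 1/2^s ≤ a ≤ 1/√2. Let ĉ be the all-ones vector. If z ∈ ℝ^s has exactly one negative component, in position i, and no zero components, then the generalized Newton iterate z⁺ = (I - SΣ(z))^{-1}ĉ (with Σ(z) = diag(sign(z))) has exactly one negative component, in position 1 + (i mod s), and no zero components. Hence the generalized Newton method cycles among s distinct definite points and never converges. -/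
/-!
With `Σ = diag (sign z)` having its single `-1` at `i`, the system `(I - SΣ) w = 1` reads
`w p = 1 + a * w (p - 1)` for `p ≠ i + 1` and `w (i + 1) = 1 - a * w i`. Read cyclically from `i + 1`,
`w` is the orbit `ζ₁, 1 + a ζ₁, …` of `x ↦ 1 + a x`, and closing the cycle forces
`ζ₁ = (2 - ∑_{k<s} aᵏ) / (1 + aˢ)`. The lower bound on `a` gives `∑_{k<s} aᵏ > 2`, so `ζ₁ < 0`; the
upper bound gives `2a² ≤ 1 < 1 + aˢ`, which is `ζ₂ = 1 + a ζ₁ > 0`, and the orbit stays positive from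
there on. `I - SΣ` is invertible because `SΣ` has sup-norm `a < 1`.
-/

open Finset Real Matrix

lemma four_mul_le_two_pow {n : ℕ} (hn : 4 ≤ n) : 4 * n ≤ 2 ^ n := by
  induction n, hn using Nat.le_induction with
  | base => norm_num
  | succ n _ ih => rw [pow_succ]; omega

lemma one_add_two_div_two_pow_pow_lt_two {s : ℕ} (hs : 3 ≤ s) : (1 + 2 / 2 ^ s : ℝ) ^ s < 2 := by
  -- at `s = 3` the claim is `125/64 < 2`, too tight for the exponential bound below
  rcases hs.eq_or_lt with rfl | hs
  · norm_num
  have hexp : exp (1 / 2) < 2 := by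
    have h := exp_one_lt_d9
    rw [← add_halves (1 : ℝ), exp_add] at h
    nlinarith [exp_pos (1 / 2)]
  have hsmall : (s : ℝ) * (2 / 2 ^ s) ≤ 1 / 2 := by
    have : (4 * s : ℝ) ≤ 2 ^ s := by exact_mod_cast four_mul_le_two_pow hs
    rw [mul_div_assoc', div_le_iff₀ (by positivity)]
    linarith
  calc (1 + 2 / 2 ^ s : ℝ) ^ s ≤ exp (2 / 2 ^ s) ^ s := by
        gcongr; linarith [add_one_le_exp (2 / 2 ^ s : ℝ)]
    _ = exp (s * (2 / 2 ^ s)) := (exp_nat_mul _ _).symm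
    _ ≤ exp (1 / 2) := exp_le_exp.2 hsmall
    _ < 2 := hexp

lemma two_lt_geom_sum {a : ℝ} {s : ℕ} (hs : 3 ≤ s) (ha : 1 / 2 + 1 / 2 ^ s ≤ a) :
    2 < ∑ k ∈ range s, a ^ k := by
  set a₀ : ℝ := 1 / 2 + 1 / 2 ^ s with ha₀_def
  have h2s : (8 : ℝ) ≤ 2 ^ s := by
    calc (8 : ℝ) = 2 ^ 3 := by norm_num
      _ ≤ 2 ^ s := pow_le_pow_right₀ (by norm_num) hs
  have ha₀ : a₀ < 1 := by
    have : 1 / (2 : ℝ) ^ s < 1 / 2 := by rw [div_lt_div_iff₀ (by positivity) (by norm_num)]; linarith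
    linarith
  have hpow : a₀ ^ s < 2 * a₀ - 1 := by
    have h := one_add_two_div_two_pow_pow_lt_two hs
    have hpos : (0 : ℝ) < 2 ^ s := by positivity
    calc a₀ ^ s = (1 + 2 / 2 ^ s) ^ s / 2 ^ s := by
          rw [← div_pow, ha₀_def]; congr 1; field_simp
      _ < 2 / 2 ^ s := by gcongr
      _ = 2 * a₀ - 1 := by ring
  calc (2 : ℝ) < ∑ k ∈ range s, a₀ ^ k := by
        have h := geom_sum_mul_neg a₀ s
        nlinarith
    _ ≤ ∑ k ∈ range s, a ^ k := by
        gcongr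

/-- The entry `k` places after the negative one of the Newton iterate for cycle length `s`;
`k = 0` and `k = 1` give the paper's `ζ₁` and `ζ₂`. -/
noncomputable def newtonEntry (a : ℝ) (s k : ℕ) : ℝ :=
  ∑ j ∈ range k, a ^ j + a ^ k * ((2 - ∑ j ∈ range s, a ^ j) / (1 + a ^ s))

section newtonEntry

variable {a : ℝ} {s : ℕ}

lemma newtonEntry_succ (a : ℝ) (s k : ℕ) :
    newtonEntry a s (k + 1) = 1 + a * newtonEntry a s k := by
  simp only [newtonEntry, sum_range_succ', pow_succ', pow_zero, ← mul_sum]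
  ring

lemma newtonEntry_zero_eq_one_sub_mul_last (ha : 0 ≤ a) (n : ℕ) :
    newtonEntry a (n + 1) 0 = 1 - a * newtonEntry a (n + 1) n := by
  have hden : 1 + a ^ (n + 1) ≠ 0 := by positivity
  simp only [newtonEntry, sum_range_succ' (fun j => a ^ j) n, pow_succ', pow_zero, ← mul_sum,
    range_zero, sum_empty]
  field_simp
  ring

lemma newtonEntry_zero_neg (ha : 0 ≤ a) (h : 2 < ∑ k ∈ range s, a ^ k) :
    newtonEntry a s 0 < 0 := by
  simp only [newtonEntry, range_zero, sum_empty, pow_zero, zero_add, one_mul]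
  exact div_neg_of_neg_of_pos (by linarith) (by positivity)

lemma newtonEntry_one_pos (ha0 : 0 < a) (ha : 2 * a ^ 2 ≤ 1) : 0 < newtonEntry a s 1 := by
  have ha1 : a < 1 := by nlinarith
  have hgeom := geom_sum_mul_neg a s
  have hpow : 0 < a ^ s := by positivity
  rw [newtonEntry_succ, newtonEntry]
  simp only [range_zero, sum_empty, pow_zero, zero_add, one_mul]
  field_simp
  nlinarith

lemma newtonEntry_succ_pos (ha0 : 0 < a) (ha : 2 * a ^ 2 ≤ 1) (k : ℕ) :
    0 < newtonEntry a s (k + 1) := by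
  induction k with
  | zero => exact newtonEntry_one_pos ha0 ha
  | succ k ih => rw [newtonEntry_succ]; positivity

end newtonEntry

lemma eq_zero_of_abs_le_mul_abs {ι : Type*} [Finite ι] {u : ι → ℝ} {a : ℝ} (f : ι → ι)
    (ha0 : 0 ≤ a) (ha1 : a < 1) (h : ∀ p, |u p| ≤ a * |u (f p)|) : u = 0 := by
  rcases isEmpty_or_nonempty ι with hι | hι
  · exact Subsingleton.elim _ _
  obtain ⟨p, hp⟩ := Finite.exists_max fun p => |u p|
  have hmax : |u p| ≤ 0 := by nlinarith [h p, hp (f p), abs_nonneg (u p)]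
  funext q
  exact abs_nonpos_iff.1 ((hp q).trans hmax)

section cyclicShift

variable {n : ℕ}

lemma one_sub_cyclicShift_mul_diagonal_mulVec_apply (a : ℝ) (σ v : Fin (n + 1) → ℝ)
    (p : Fin (n + 1)) :
    ((1 - (Matrix.of fun p q : Fin (n + 1) => if p = q + 1 then a else 0) * diagonal σ) *ᵥ v) p
      = v p - a * σ (p - 1) * v (p - 1) := by
  have hshift : ∀ q : Fin (n + 1), p = q + 1 ↔ q = p - 1 := fun q => by
    rw [eq_comm, eq_sub_iff_add_eq]
  rw [sub_mulVec, ← mulVec_mulVec, one_mulVec, Pi.sub_apply]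
  simp only [mulVec, dotProduct, of_apply, hshift, ite_mul, zero_mul, sum_ite_eq', sum_ite_eq,
    mem_univ, if_true, diagonal_apply]
  ring

lemma isUnit_one_sub_cyclicShift_mul_diagonal {a : ℝ} {σ : Fin (n + 1) → ℝ} (ha0 : 0 ≤ a)
    (ha1 : a < 1) (hσ : ∀ j, |σ j| ≤ 1) :
    IsUnit (1 - (Matrix.of fun p q : Fin (n + 1) => if p = q + 1 then a else 0) * diagonal σ) := by
  refine mulVec_injective_iff_isUnit.1 fun v w hvw => sub_eq_zero.1 ?_
  refine eq_zero_of_abs_le_mul_abs (· - 1) ha0 ha1 fun p => ?_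
  rw [← sub_eq_zero, ← mulVec_sub] at hvw
  have hp := congrFun hvw p
  rw [Pi.zero_apply, one_sub_cyclicShift_mul_diagonal_mulVec_apply] at hp
  rw [sub_eq_zero.1 hp, abs_mul, abs_mul, abs_of_nonneg ha0]
  gcongr
  exact mul_le_of_le_one_right ha0 (hσ _)

lemma one_sub_cyclicShift_mul_diagonal_mulVec_eq_one {a : ℝ} {g : ℕ → ℝ} (i : Fin (n + 1))
    (hsucc : ∀ k, g (k + 1) = 1 + a * g k) (hwrap : g 0 = 1 - a * g n) :
    (1 - (Matrix.of fun p q : Fin (n + 1) => if p = q + 1 then a else 0) *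
        diagonal (fun j => if j = i then -1 else 1)) *ᵥ (fun q => g (q - (i + 1)).val)
      = fun _ => 1 := by
  funext p
  rw [one_sub_cyclicShift_mul_diagonal_mulVec_apply]
  by_cases hp : p = i + 1
  · have hval : (i - (i + 1)).val = n := by rw [sub_add_cancel_left, Fin.coe_neg_one]
    simp only [hp, add_sub_cancel_right, if_true, sub_self, Fin.val_zero, hval, hwrap]
    ring
  · have hp1 : p - 1 ≠ i := fun h => hp (by rw [← h, sub_add_cancel])
    have hval : (p - (i + 1)).val = (p - 1 - (i + 1)).val + 1 := by
      rw [sub_right_comm, Fin.val_sub_one_of_ne_zero (sub_ne_zero.2 hp)]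
      have := Fin.val_ne_zero_iff.2 (sub_ne_zero.2 hp)
      omega
    simp only [hp1, if_false, hval, hsucc]
    ring

lemma inv_one_sub_cyclicShift_mul_diagonal_mulVec_one {a : ℝ} {g : ℕ → ℝ} (ha0 : 0 ≤ a)
    (ha1 : a < 1) (i : Fin (n + 1)) (hsucc : ∀ k, g (k + 1) = 1 + a * g k)
    (hwrap : g 0 = 1 - a * g n) :
    (1 - (Matrix.of fun p q : Fin (n + 1) => if p = q + 1 then a else 0) *
        diagonal (fun j => if j = i then -1 else 1))⁻¹ *ᵥ (fun _ => 1)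
      = fun q => g (q - (i + 1)).val := by
  have hσ : ∀ j, |(if j = i then -1 else 1 : ℝ)| ≤ 1 := fun j => by split_ifs <;> simp
  have := (isUnit_one_sub_cyclicShift_mul_diagonal ha0 ha1 hσ).invertible
  exact inv_mulVec_eq_vec (one_sub_cyclicShift_mul_diagonal_mulVec_eq_one i hsucc hwrap).symm

end cyclicShift

/-- Cyclic counterexample for generalized Newton: for the cyclic Toeplitz
matrix `S` with subdiagonal (and corner) entries `a`, `1/2 + 1/2^s ≤ a ≤ 1/√2`,
`s > 2`, and right-hand side `ĉ = (1,…,1)`, if `z` has no zero components and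
exactly one negative component, in position `i`, then the generalized Newton
iterate `z⁺ = (I - S Σ(z))⁻¹ ĉ` has no zero components and exactly one
negative component, in the cyclically next position `i + 1`. -/
theorem generalized_newton_cycles
    (m : ℕ) (a : ℝ)
    (ha1 : 1 / 2 + 1 / 2 ^ (m + 3) ≤ a) (ha2 : a ≤ 1 / Real.sqrt 2)
    (z : Fin (m + 3) → ℝ) (i : Fin (m + 3))
    (hzi : z i < 0) (hz : ∀ j, j ≠ i → 0 < z j) :
    (∀ j, ((1 - (Matrix.of fun p q : Fin (m + 3) => if p = q + 1 then a else 0) *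
        Matrix.diagonal fun j => Real.sign (z j))⁻¹.mulVec fun _ => (1 : ℝ)) j ≠ 0) ∧
    ((1 - (Matrix.of fun p q : Fin (m + 3) => if p = q + 1 then a else 0) *
        Matrix.diagonal fun j => Real.sign (z j))⁻¹.mulVec fun _ => (1 : ℝ)) (i + 1) < 0 ∧
    ∀ j, j ≠ i + 1 →
      0 < ((1 - (Matrix.of fun p q : Fin (m + 3) => if p = q + 1 then a else 0) *
        Matrix.diagonal fun j => Real.sign (z j))⁻¹.mulVec fun _ => (1 : ℝ)) j := by
  have ha0 : 0 < a := lt_of_lt_of_le (by positivity) ha1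
  have hsq : 2 * a ^ 2 ≤ 1 := by
    have h := pow_le_pow_left₀ ha0.le ha2 2
    rw [div_pow, one_pow, sq_sqrt zero_le_two] at h
    linarith
  have hsign : (fun j => Real.sign (z j)) = fun j => if j = i then -1 else 1 := funext fun j => by
    by_cases hj : j = i
    · simp [hj, Real.sign_of_neg hzi]
    · simp [hj, Real.sign_of_pos (hz j hj)]
  rw [hsign, inv_one_sub_cyclicShift_mul_diagonal_mulVec_one ha0.le (by nlinarith) i
    (newtonEntry_succ a _) (newtonEntry_zero_eq_one_sub_mul_last ha0.le _)]
  have hneg : newtonEntry a (m + 3) 0 < 0 :=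
    newtonEntry_zero_neg ha0.le (two_lt_geom_sum (by omega) ha1)
  have hpos : ∀ j, j ≠ i + 1 → 0 < newtonEntry a (m + 3) (j - (i + 1)).val := fun j hj => by
    obtain ⟨k, hk⟩ := Nat.exists_eq_succ_of_ne_zero (Fin.val_ne_zero_iff.2 (sub_ne_zero.2 hj))
    rw [hk]
    exact newtonEntry_succ_pos ha0 hsq k
  refine ⟨fun j => ?_, by simpa using hneg, hpos⟩
  by_cases hj : j = i + 1
  · simpa [hj] using hneg.ne
  · exact (hpos j hj).ne'
end
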